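/- Given any two Coxeter elements c and c′ of a finite Coxeter group W, there is a finite sequence c = c₀, c₁, …, c_k = c′ of Coxeter elements such that for each i ∈ {1, …, k} there is a simple generator s_{i−1} initial in c_{i−1} with c_i = s_{i−1}c_{i−1}s_{i−1}. -/

import Mathlib

open CoxeterSystem

variable {B : Type*} [DecidableEq B] {W : Type*} [Group W] {M : CoxeterMatrix B}

/-- The standard parabolic subgroup `W_J` generated by the simple generators in `J`. -/
def CoxeterSystem.StandardParabolic (cs : CoxeterSystem M W) (J : Set B) : Subgroup W :=
  Subgroup.closure (cs.simple '' J)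

/-- A parabolic subgroup: a conjugate of a standard parabolic subgroup. -/
def CoxeterSystem.IsParabolic (cs : CoxeterSystem M W) (W' : Subgroup W) : Prop :=
  ∃ (w : W) (J : Set B), W' = (cs.StandardParabolic J).map (MulAut.conj w).toMonoidHom

/-- The set of inversions of `w`: reflections `t` with `ℓ(tw) < ℓ(w)`. -/
def CoxeterSystem.Inversions (cs : CoxeterSystem M W) (w : W) : Set W :=
  {t | cs.IsReflection t ∧ cs.length (t * w) < cs.length w}

/-- `t` is a canonical generator of `W'`: a reflection in `W'` with `I(t) ∩ W' = {t}`. -/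
def CoxeterSystem.IsCanonicalGenerator (cs : CoxeterSystem M W) (W' : Subgroup W) (t : W) :
    Prop :=
  cs.IsReflection t ∧ t ∈ W' ∧ cs.Inversions t ∩ (W' : Set W) = {t}

/-- A cover reflection of `w`: a reflection `t` with `t * w = w * s` for a descent `s` of `w`. -/
def CoxeterSystem.IsCoverReflection (cs : CoxeterSystem M W) (w t : W) : Prop :=
  cs.IsReflection t ∧ ∃ i : B, cs.IsRightDescent w i ∧ t * w = w * cs.simple i

/-- A Coxeter element: the product of the simple generators, each occurring once. -/
def CoxeterSystem.IsCoxeterElement (cs : CoxeterSystem M W) (c : W) : Prop :=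
  ∃ l : List B, l.Nodup ∧ (∀ i : B, i ∈ l) ∧ cs.wordProd l = c

/-- `s i` is initial in `c`, i.e. `ℓ(sc) < ℓ(c)`. -/
def CoxeterSystem.IsInitial (cs : CoxeterSystem M W) (i : B) (c : W) : Prop :=
  cs.length (cs.simple i * c) < cs.length c

/-- `s i` is final in `c`, i.e. `ℓ(cs) < ℓ(c)`. -/
def CoxeterSystem.IsFinal (cs : CoxeterSystem M W) (i : B) (c : W) : Prop :=
  cs.length (c * cs.simple i) < cs.length c

/-- `w` is sortable with respect to the Coxeter element `c` of the standard parabolic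
subsystem on `J`: for some (equivalently, every) reduced word `l` for `c` using each letter
of `J` exactly once, there is a nested chain `K₁ ⊇ K₂ ⊇ ⋯` of subsets such that the
concatenation `c_{K₁} c_{K₂} ⋯` is a reduced word for `w`. -/
def CoxeterSystem.IsSortableIn (cs : CoxeterSystem M W) (J : Set B) (c w : W) : Prop :=
  ∃ l : List B, l.Nodup ∧ (∀ i : B, i ∈ l ↔ i ∈ J) ∧ cs.wordProd l = c ∧
    ∃ K : List (Finset B), List.Chain' (fun A A' => A' ⊆ A) K ∧
      cs.IsReduced ((K.map (fun Ki => l.filter (fun i => i ∈ Ki))).flatten) ∧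
      cs.wordProd ((K.map (fun Ki => l.filter (fun i => i ∈ Ki))).flatten) = w

/-- `w` is `c`-sortable. -/
def CoxeterSystem.IsSortable (cs : CoxeterSystem M W) (c w : W) : Prop :=
  cs.IsSortableIn Set.univ c w

/-- The absolute length of `x`: the minimal length of a word in the reflections whose
product is `x`. -/
noncomputable def CoxeterSystem.absLength (cs : CoxeterSystem M W) (x : W) : ℕ :=
  sInf {k | ∃ l : List W, (∀ t ∈ l, cs.IsReflection t) ∧ l.length = k ∧ l.prod = x}

/-- The absolute order: `x ≤_T y` iff `ℓ_T(x) + ℓ_T(x⁻¹y) = ℓ_T(y)`. -/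
def CoxeterSystem.absLeT (cs : CoxeterSystem M W) (x y : W) : Prop :=
  cs.absLength x + cs.absLength (x⁻¹ * y) = cs.absLength y

set_option linter.unusedSectionVars false
set_option maxHeartbeats 1000000
namespace CoxAux

open CoxeterSystem List

set_option linter.unusedSectionVars false


variable {B : Type*} [DecidableEq B] {W : Type*} [Group W] {M : CoxeterMatrix B}

/-- adjacency in the Coxeter graph -/
def Adj (M : CoxeterMatrix B) (i j : B) : Prop := i ≠ j ∧ M i j ≠ 2

lemma adj_symm {i j : B} (h : Adj M i j) : Adj M j i :=
  ⟨h.1.symm, by rw [M.symmetric j i]; exact h.2⟩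

section Geom

variable (M) [Fintype B]

noncomputable def kk (i j : B) : ℝ := -Real.cos (Real.pi / M i j)

lemma kk_diag (i : B) : kk M i i = 1 := by
  simp [kk, M.diagonal i, Real.cos_pi]

lemma kk_symm (i j : B) : kk M i j = kk M j i := by
  rw [kk, kk, M.symmetric j i]

lemma kk_nonpos {i j : B} (h : i ≠ j) : kk M i j ≤ 0 := by
  rcases Nat.eq_zero_or_pos (M i j) with h0 | hpos
  · simp [kk, h0, Real.cos_zero]
  · have h1 : M i j ≠ 1 := M.off_diagonal i j h
    have h2 : 2 ≤ M i j := by omega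
    have hle : Real.pi / M i j ≤ Real.pi / 2 := by
      apply div_le_div_of_nonneg_left Real.pi_pos.le (by norm_num)
      exact_mod_cast h2
    have hge : 0 ≤ Real.pi / M i j := by
      positivity
    have := Real.cos_nonneg_of_mem_Icc (x := Real.pi / M i j)
      ⟨by linarith [Real.pi_pos], hle⟩
    simp only [kk]
    linarith

lemma kk_le_neg_half {i j : B} (h : Adj M i j) : kk M i j ≤ -(1/2) := by
  obtain ⟨hne, h2⟩ := h
  rcases Nat.eq_zero_or_pos (M i j) with h0 | hpos
  · simp [kk, h0, Real.cos_zero]; norm_num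
  · have h1 : M i j ≠ 1 := M.off_diagonal i j hne
    have h3 : 3 ≤ M i j := by omega
    have hle : Real.pi / M i j ≤ Real.pi / 3 := by
      apply div_le_div_of_nonneg_left Real.pi_pos.le (by norm_num)
      exact_mod_cast h3
    have hge : 0 ≤ Real.pi / M i j := by positivity
    have hcos : Real.cos (Real.pi / 3) ≤ Real.cos (Real.pi / M i j) := by
      apply Real.cos_le_cos_of_nonneg_of_le_pi hge ?_ hle
      calc Real.pi / 3 ≤ Real.pi / 1 := by
            apply div_le_div_of_nonneg_left Real.pi_pos.le (by norm_num) (by norm_num)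
        _ = Real.pi := by norm_num
    rw [Real.cos_pi_div_three] at hcos
    simp only [kk]
    linarith

/-- the bilinear form -/
noncomputable def bb (x y : B → ℝ) : ℝ := ∑ i, ∑ j, x i * (kk M i j * y j)

lemma bb_symm (x y : B → ℝ) : bb M x y = bb M y x := by
  rw [bb, bb, Finset.sum_comm]
  apply Finset.sum_congr rfl; intro j _
  apply Finset.sum_congr rfl; intro i _
  rw [kk_symm M i j]; ring

lemma bb_single_left (i : B) (y : B → ℝ) :
    bb M (Pi.single i 1) y = ∑ j, kk M i j * y j := by
  rw [bb]
  rw [Finset.sum_eq_single i]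
  · simp
  · intro b _ hb
    simp [Pi.single_eq_of_ne hb]
  · intro h; exact absurd (Finset.mem_univ i) h

lemma bb_single_single (i j : B) :
    bb M (Pi.single i 1) (Pi.single j 1) = kk M i j := by
  rw [bb_single_left]
  rw [Finset.sum_eq_single j]
  · simp
  · intro b _ hb
    simp [Pi.single_eq_of_ne hb]
  · intro h; exact absurd (Finset.mem_univ j) h

lemma bb_add_right (x y z : B → ℝ) : bb M x (y + z) = bb M x y + bb M x z := by
  simp only [bb, ← Finset.sum_add_distrib]
  apply Finset.sum_congr rfl; intro i _
  apply Finset.sum_congr rfl; intro j _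
  simp [Pi.add_apply]; ring

lemma bb_smul_right (c : ℝ) (x y : B → ℝ) : bb M x (c • y) = c * bb M x y := by
  simp only [bb, Finset.mul_sum]
  apply Finset.sum_congr rfl; intro i _
  apply Finset.sum_congr rfl; intro j _
  simp [Pi.smul_apply, smul_eq_mul]; ring

lemma bb_sub_right (x y z : B → ℝ) : bb M x (y - z) = bb M x y - bb M x z := by
  have := bb_add_right M x (y - z) z
  simp only [sub_add_cancel] at this
  linarith

lemma bb_add_left (x y z : B → ℝ) : bb M (x + y) z = bb M x z + bb M y z := by
  rw [bb_symm, bb_add_right, bb_symm M z x, bb_symm M z y]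

lemma bb_smul_left (c : ℝ) (x y : B → ℝ) : bb M (c • x) y = c * bb M x y := by
  rw [bb_symm, bb_smul_right, bb_symm M y x]

lemma bb_sub_left (x y z : B → ℝ) : bb M (x - y) z = bb M x z - bb M y z := by
  rw [bb_symm, bb_sub_right, bb_symm M z x, bb_symm M z y]

lemma bb_zero_right (x : B → ℝ) : bb M x 0 = 0 := by
  simp [bb]

/-- reflection in a vector -/
noncomputable def rf (v : B → ℝ) : Function.End (B → ℝ) :=
  fun x => x - (2 * bb M v x) • v

lemma rf_apply (v x : B → ℝ) : rf M v x = x - (2 * bb M v x) • v := rfl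

lemma rf_invol {v : B → ℝ} (hv : bb M v v = 1) (x : B → ℝ) : rf M v (rf M v x) = x := by
  simp only [rf_apply, bb_sub_right, bb_smul_right, hv]
  module

lemma rf_bb {v : B → ℝ} (hv : bb M v v = 1) (x y : B → ℝ) :
    bb M (rf M v x) (rf M v y) = bb M x y := by
  simp only [rf_apply, bb_sub_right, bb_sub_left, bb_smul_right, bb_smul_left, hv]
  rw [bb_symm M v x]
  ring

lemma rf_add (v x y : B → ℝ) : rf M v (x + y) = rf M v x + rf M v y := by
  simp only [rf_apply, bb_add_right]
  module

lemma rf_smul (v : B → ℝ) (c : ℝ) (x : B → ℝ) : rf M v (c • x) = c • rf M v x := by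
  simp only [rf_apply, bb_smul_right]
  module

lemma rf_coord (i : B) (x : B → ℝ) {p : B} (hp : p ≠ i) :
    rf M (Pi.single i 1) x p = x p := by
  simp [rf_apply, Pi.single_eq_of_ne hp]

lemma rf_fixed {v x : B → ℝ} (hx : bb M v x = 0) : rf M v x = x := by
  simp [rf_apply, hx]

end Geom

section PairDyn

/-- one linear step of the pair dynamics -/
def pstep (c : ℝ) (p : ℝ × ℝ) : ℝ × ℝ :=
  ((4*c^2-1)*p.1 + 2*c*p.2, -(2*c)*p.1 - p.2)

/-- iterated pair dynamics -/
def pseq (c : ℝ) (p : ℝ × ℝ) : ℕ → ℝ × ℝ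
  | 0 => p
  | n+1 => pstep c (pseq c p n)

/-- Chebyshev-like sequence -/
noncomputable def cheb (τ : ℝ) : ℕ → ℝ
  | 0 => 0
  | 1 => 1
  | (n+2) => τ * cheb τ (n+1) - cheb τ n

lemma cheb_zero (τ : ℝ) : cheb τ 0 = 0 := rfl
lemma cheb_one (τ : ℝ) : cheb τ 1 = 1 := rfl
lemma cheb_add_two (τ : ℝ) (n : ℕ) : cheb τ (n+2) = τ * cheb τ (n+1) - cheb τ n := rfl

lemma pseq_closed (c : ℝ) (p : ℝ × ℝ) (n : ℕ) :
    pseq c p (n+1) =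
      (cheb (4*c^2-2) (n+1) * (pstep c p).1 - cheb (4*c^2-2) n * p.1,
       cheb (4*c^2-2) (n+1) * (pstep c p).2 - cheb (4*c^2-2) n * p.2) := by
  induction n with
  | zero => simp [pseq, cheb_zero, cheb_one]
  | succ n ih =>
      show pstep c (pseq c p (n+1)) = _
      rw [ih]
      simp only [pstep, cheb_add_two, Prod.mk.injEq]
      constructor <;> ring

lemma cheb_sin (θ : ℝ) (n : ℕ) :
    cheb (2 * Real.cos θ) n * Real.sin θ = Real.sin (n * θ) := by
  induction n using Nat.strong_induction_on with
  | _ n ih =>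
    match n with
    | 0 => simp [cheb_zero]
    | 1 => simp [cheb_one]
    | (n+2) =>
      rw [cheb_add_two]
      have h1 := ih (n+1) (by omega)
      have h2 := ih n (by omega)
      have e1 : ((n+2 : ℕ) : ℝ) * θ = ((n+1 : ℕ) : ℝ) * θ + θ := by push_cast; ring
      have e2 : ((n : ℕ) : ℝ) * θ = ((n+1 : ℕ) : ℝ) * θ - θ := by push_cast; ring
      rw [e1, Real.sin_add]
      have : Real.sin (↑n * θ) = Real.sin (↑(n+1) * θ) * Real.cos θ - Real.cos (↑(n+1) * θ) * Real.sin θ := by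
        rw [e2, Real.sin_sub]
      rw [this] at h2
      linear_combination 2 * Real.cos θ * h1 - h2

lemma cheb_mono {τ : ℝ} (hτ : 2 ≤ τ) : ∀ n, 0 ≤ cheb τ n ∧ cheb τ n ≤ cheb τ (n+1) := by
  intro n
  induction n with
  | zero => simp [cheb_zero, cheb_one]
  | succ n ih =>
      obtain ⟨h0, h1⟩ := ih
      have h2 : 0 ≤ cheb τ (n+1) := h0.trans h1
      constructor
      · exact h2
      · rw [cheb_add_two]
        nlinarith

lemma cheb_ge_one {τ : ℝ} (hτ : 2 ≤ τ) (n : ℕ) : 1 ≤ cheb τ (n+1) := by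
  induction n with
  | zero => simp [cheb_one]
  | succ n ih => exact ih.trans (cheb_mono hτ (n+1)).2

end PairDyn
section GeomPair

variable {B : Type*} [DecidableEq B] {M : CoxeterMatrix B} [Fintype B]

lemma pair_step (M : CoxeterMatrix B) [Fintype B] {va vb y : B → ℝ}
    (hva : bb M va va = 1) (hvb : bb M vb vb = 1)
    (hya : bb M va y = 0) (hyb : bb M vb y = 0) (a b : ℝ) :
    (rf M va * rf M vb) (a • va + b • vb + y)
      = (pstep (bb M va vb) (a, b)).1 • va + (pstep (bb M va vb) (a, b)).2 • vb + y := by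
  set c := bb M va vb with hc
  show rf M va (rf M vb (a • va + b • vb + y)) = _
  have hba : bb M vb va = c := by rw [bb_symm]
  have h1 : rf M vb (a • va + b • vb + y) = a • va + (-b - 2*c*a) • vb + y := by
    rw [rf_apply]
    simp only [bb_add_right, bb_smul_right, hvb, hyb, hba]
    module
  rw [h1, rf_apply]
  simp only [bb_add_right, bb_smul_right, hva, hya, hc.symm]
  simp only [pstep]
  match_scalars <;> ring

lemma pair_iter (M : CoxeterMatrix B) [Fintype B] {va vb y : B → ℝ}
    (hva : bb M va va = 1) (hvb : bb M vb vb = 1)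
    (hya : bb M va y = 0) (hyb : bb M vb y = 0) (a b : ℝ) (n : ℕ) :
    ((rf M va * rf M vb)^n) (a • va + b • vb + y)
      = (pseq (bb M va vb) (a, b) n).1 • va + (pseq (bb M va vb) (a, b) n).2 • vb + y := by
  induction n with
  | zero => rfl
  | succ n ih =>
      rw [pow_succ']
      show (rf M va * rf M vb) (((rf M va * rf M vb)^n) _) = _
      rw [ih]
      rw [pair_step M hva hvb hya hyb]
      rfl

/-- The key liftability property of the geometric representation. -/
theorem sigma_liftable (M : CoxeterMatrix B) [Fintype B] :
    M.IsLiftable (fun i => rf M (Pi.single i 1)) := by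
  intro i j
  by_cases h0 : M i j = 0
  · rw [h0, pow_zero]
  by_cases hij : i = j
  · subst hij
    rw [M.diagonal i, pow_one]
    funext x
    show rf M _ (rf M _ x) = x
    exact rf_invol M (by rw [bb_single_single, kk_diag]) x
  -- main case : m ≥ 2
  have h1 : M i j ≠ 1 := M.off_diagonal i j hij
  have hm2 : 2 ≤ M i j := by omega
  set m := M i j with hm
  set ei : B → ℝ := Pi.single i 1
  set ej : B → ℝ := Pi.single j 1
  have hei : bb M ei ei = 1 := by rw [bb_single_single, kk_diag]
  have hej : bb M ej ej = 1 := by rw [bb_single_single, kk_diag]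
  have hcval : bb M ei ej = kk M i j := bb_single_single M i j
  set c := bb M ei ej with hc
  -- c ∈ (-1, 0]
  have hmR0 : (0:ℝ) < (m:ℝ) := by exact_mod_cast (by omega : 0 < m)
  have hpm_pos : 0 < Real.pi / m := div_pos Real.pi_pos hmR0
  have hpm_le : Real.pi / m ≤ Real.pi := by
    calc Real.pi / (m:ℝ) ≤ Real.pi / 1 := by
          apply div_le_div_of_nonneg_left Real.pi_pos.le (by norm_num)
          exact_mod_cast (by omega : 1 ≤ m)
      _ = Real.pi := by norm_num
  have hcos_lt : Real.cos (Real.pi / m) < 1 := by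
    have h := Real.cos_lt_cos_of_nonneg_of_le_pi (le_refl 0) hpm_le hpm_pos
    simpa using h
  have hcos_nonneg : 0 ≤ Real.cos (Real.pi / m) := by
    apply Real.cos_nonneg_of_mem_Icc
    constructor
    · linarith
    · apply div_le_div_of_nonneg_left Real.pi_pos.le (by norm_num)
      exact_mod_cast hm2
  have hc_range : -1 < c ∧ c ≤ 0 := by
    rw [hcval, kk]
    constructor <;> linarith
  have hc2 : 1 - c^2 > 0 := by nlinarith [hc_range.1, hc_range.2]
  funext x
  -- decompose x
  set γ1 := bb M ei x with hγ1
  set γ2 := bb M ej x with hγ2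
  set a0 : ℝ := (γ1 - c*γ2)/(1-c^2) with ha0
  set b0 : ℝ := (γ2 - c*γ1)/(1-c^2) with hb0
  set y : B → ℝ := x - a0 • ei - b0 • ej with hy
  have hcji : bb M ej ei = c := by rw [bb_symm]
  have hya : bb M ei y = 0 := by
    rw [hy]
    simp only [bb_sub_right, bb_smul_right, hei, hc.symm]
    rw [← hγ1, ha0, hb0]
    field_simp
    try ring
  have hyb : bb M ej y = 0 := by
    rw [hy]
    simp only [bb_sub_right, bb_smul_right, hej, hcji]
    rw [← hγ2, ha0, hb0]
    field_simp
    try ring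
  have hx : x = a0 • ei + b0 • ej + y := by rw [hy]; module
  have hiter := pair_iter M hei hej hya hyb a0 b0 m
  rw [← hc] at hiter
  show ((rf M ei * rf M ej)^m) x = (1 : Function.End (B → ℝ)) x
  have hone : (1 : Function.End (B → ℝ)) x = x := rfl
  rw [hone]
  nth_rewrite 1 [hx]
  rw [hiter]
  -- now show pseq c (a0, b0) m = (a0, b0)
  suffices hps : pseq c (a0, b0) m = (a0, b0) by
    rw [hps, ← hx]
  rcases eq_or_lt_of_le hm2 with hm2' | hm3
  · -- m = 2, c = 0
    have hc0 : c = 0 := by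
      rw [hcval, kk, ← hm, ← hm2']
      norm_num
    rw [← hm2']
    simp [pseq, pstep, hc0]
  · -- m ≥ 3
    have hm3' : 3 ≤ m := hm3
    set θ := 2 * Real.pi / m with hθ
    have hmR : (0:ℝ) < m := by positivity
    have hθpos : 0 < θ := by rw [hθ]; positivity
    have hθlt : θ < Real.pi := by
      rw [hθ]
      rw [div_lt_iff₀ hmR]
      have : (3:ℝ) ≤ m := by exact_mod_cast hm3'
      nlinarith [Real.pi_pos]
    have hsin : Real.sin θ ≠ 0 := ne_of_gt (Real.sin_pos_of_pos_of_lt_pi hθpos hθlt)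
    have hτ : 4*c^2 - 2 = 2 * Real.cos θ := by
      have : θ = 2 * (Real.pi / m) := by rw [hθ]; ring
      rw [this, Real.cos_two_mul]
      rw [hcval, kk, ← hm]
      ring
    have hchm : cheb (4*c^2-2) m = 0 := by
      have := cheb_sin θ m
      rw [← hτ] at this
      have hmθ : (m:ℝ) * θ = 2 * Real.pi := by
        rw [hθ]; field_simp
      rw [hmθ, Real.sin_two_pi] at this
      exact (mul_eq_zero.mp this).resolve_right hsin
    have hchm1 : cheb (4*c^2-2) (m-1) = -1 := by
      have := cheb_sin θ (m-1)
      rw [← hτ] at this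
      have hm1θ : ((m-1:ℕ):ℝ) * θ = 2 * Real.pi - θ := by
        have : ((m-1:ℕ):ℝ) = (m:ℝ) - 1 := by
          have : 1 ≤ m := by omega
          push_cast [Nat.cast_sub this]
          ring
        rw [this, hθ]
        field_simp
      rw [hm1θ, Real.sin_two_pi_sub] at this
      have h2 : cheb (4*c^2-2) (m-1) * Real.sin θ = (-1) * Real.sin θ := by
        rw [this]; ring
      exact mul_right_cancel₀ hsin h2
    have hmsucc : m = (m - 1) + 1 := by omega
    rw [hmsucc, pseq_closed]
    rw [← hmsucc, hchm, hchm1]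
    simp

end GeomPair
section Rep

variable {B : Type*} [DecidableEq B] {W : Type*} [Group W] {M : CoxeterMatrix B} [Fintype B]

/-- the geometric representation -/
noncomputable def grep (cs : CoxeterSystem M W) : W →* Function.End (B → ℝ) :=
  cs.lift ⟨fun i => rf M (Pi.single i 1), sigma_liftable M⟩

variable (cs : CoxeterSystem M W)

lemma grep_simple (i : B) : grep cs (cs.simple i) = rf M (Pi.single i 1) :=
  cs.lift_apply_simple (sigma_liftable M) i

/-- "good" endomorphisms: additive, homogeneous, and preserving the form -/
def GoodEnd (M : CoxeterMatrix B) [Fintype B] (g : Function.End (B → ℝ)) : Prop :=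
  (∀ x y, g (x + y) = g x + g y) ∧ (∀ (c : ℝ) x, g (c • x) = c • g x) ∧
    (∀ x y, bb M (g x) (g y) = bb M x y)

lemma goodEnd_one : GoodEnd M (1 : Function.End (B → ℝ)) :=
  ⟨fun _ _ => rfl, fun _ _ => rfl, fun _ _ => rfl⟩

lemma goodEnd_mul {g h : Function.End (B → ℝ)} (hg : GoodEnd M g) (hh : GoodEnd M h) :
    GoodEnd M (g * h) := by
  obtain ⟨hg1, hg2, hg3⟩ := hg
  obtain ⟨hh1, hh2, hh3⟩ := hh
  refine ⟨fun x y => ?_, fun c x => ?_, fun x y => ?_⟩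
  · show g (h (x + y)) = g (h x) + g (h y); rw [hh1, hg1]
  · show g (h (c • x)) = c • g (h x); rw [hh2, hg2]
  · show bb M (g (h x)) (g (h y)) = bb M x y; rw [hg3, hh3]

lemma goodEnd_rf {v : B → ℝ} (hv : bb M v v = 1) : GoodEnd M (rf M v) :=
  ⟨rf_add M v, rf_smul M v, rf_bb M hv⟩

lemma goodEnd_grep (w : W) : GoodEnd M (grep cs w) := by
  obtain ⟨ω, -, rfl⟩ := cs.exists_reduced_word' w
  induction ω with
  | nil => rw [cs.wordProd_nil, map_one]; exact goodEnd_one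
  | cons i ω ih =>
      rw [cs.wordProd_cons, map_mul, grep_simple]
      exact goodEnd_mul (goodEnd_rf (by rw [bb_single_single, kk_diag])) ih

lemma goodEnd_sub {g : Function.End (B → ℝ)} (hg : GoodEnd M g) (x y : B → ℝ) :
    g (x - y) = g x - g y := by
  have h1 : x - y = x + (-1 : ℝ) • y := by module
  rw [h1, hg.1, hg.2.1]
  module

lemma grep_coord (j : B) : ∀ (ω : List B), j ∉ ω → ∀ x, grep cs (cs.wordProd ω) x j = x j := by
  intro ω hj x
  induction ω with
  | nil => rw [cs.wordProd_nil, map_one]; rfl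
  | cons i ω ih =>
      rw [cs.wordProd_cons, map_mul, grep_simple]
      have hji : j ≠ i := fun h => hj (h ▸ List.mem_cons_self)
      show rf M (Pi.single i 1) (grep cs (cs.wordProd ω) x) j = x j
      rw [rf_coord M i _ hji]
      exact ih (fun h => hj (List.mem_cons_of_mem i h))

lemma grep_inv_apply (q : W) (z : B → ℝ) : grep cs q (grep cs q⁻¹ z) = z := by
  have : grep cs q * grep cs q⁻¹ = 1 := by rw [← map_mul, mul_inv_cancel, map_one]
  exact congrFun this z

lemma grep_conj (q : W) (x0 : B) :
    grep cs (q * cs.simple x0 * q⁻¹) = rf M (grep cs q (Pi.single x0 1)) := by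
  have hq := goodEnd_grep cs q
  funext z
  have h1 : grep cs (q * cs.simple x0 * q⁻¹) z
      = grep cs q (rf M (Pi.single x0 1) (grep cs q⁻¹ z)) := by
    rw [map_mul, map_mul, grep_simple]; rfl
  rw [h1, rf_apply, goodEnd_sub hq, hq.2.1, grep_inv_apply]
  have h2 : bb M (Pi.single x0 1) (grep cs q⁻¹ z)
      = bb M (grep cs q (Pi.single x0 1)) z := by
    rw [← hq.2.2 (Pi.single x0 1) (grep cs q⁻¹ z), grep_inv_apply]
  rw [h2, rf_apply]

lemma pair_infinite {va vb : B → ℝ} (hva : bb M va va = 1) (hvb : bb M vb vb = 1)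
    (hc : bb M va vb ≤ -1) (p1 : B) (h1 : va p1 = 0) (h2 : 1 ≤ vb p1) (k : ℕ) :
    ((rf M va * rf M vb)^(k+1)) va ≠ va := by
  intro hEq
  set c := bb M va vb with hcdef
  have key := pair_iter M hva hvb (bb_zero_right M va) (bb_zero_right M vb) 1 0 (k+1)
  rw [show ((1:ℝ) • va + (0:ℝ) • vb + (0 : B → ℝ)) = va from by module] at key
  rw [hEq] at key
  have hτ : 2 ≤ 4*c^2-2 := by nlinarith
  have hB : (pseq c (1,0) (k+1)).2 = cheb (4*c^2-2) (k+1) * (-(2*c)) := by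
    rw [pseq_closed]; simp [pstep]
  have hge : 2 ≤ (pseq c (1,0) (k+1)).2 := by
    rw [hB]
    have := cheb_ge_one hτ k
    nlinarith
  have := congrFun key p1
  simp only [Pi.add_apply, Pi.smul_apply, smul_eq_mul, Pi.zero_apply, h1] at this
  nlinarith

/-- the auxiliary vector built along a path -/
noncomputable def UU (M : CoxeterMatrix B) [Fintype B] : List B → (B → ℝ)
  | [] => 0
  | z :: zs => if zs.isEmpty then Pi.single z 1 else rf M (Pi.single z 1) (UU M zs)

lemma UU_singleton (z : B) : UU M [z] = Pi.single z 1 := by simp [UU]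

lemma UU_cons (z w : B) (t : List B) :
    UU M (z :: w :: t) = rf M (Pi.single z 1) (UU M (w :: t)) := by simp [UU]

lemma UU_spec : ∀ (zs : List B), zs ≠ [] → zs.Nodup → zs.Chain' (Adj M) →
    (∀ p, p ∉ zs → UU M zs p = 0) ∧ (∀ p ∈ zs, 1 ≤ UU M zs p) ∧
      bb M (UU M zs) (UU M zs) = 1 := by
  intro zs
  induction zs with
  | nil => intro h; exact absurd rfl h
  | cons z zs' ih =>
      intro _ hnd hch
      match zs' , ih with
      | [], _ =>
          refine ⟨?_, ?_, ?_⟩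
          · intro p hp
            rw [UU_singleton]
            have : p ≠ z := by simp at hp; exact hp
            simp [Pi.single_eq_of_ne this]
          · intro p hp
            have : p = z := by simpa using hp
            subst this
            rw [UU_singleton]; simp
          · rw [UU_singleton, bb_single_single, kk_diag]
      | w :: t, ih =>
          have hzs' : (w :: t) ≠ [] := by simp
          have hnd' : (w :: t).Nodup := hnd.of_cons
          have hznotin : z ∉ (w :: t) := (List.nodup_cons.mp hnd).1
          have hch' : (w :: t).Chain' (Adj M) := (List.isChain_cons.mp hch).2
          have hadj : Adj M z w := (List.isChain_cons_cons.mp hch).1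
          obtain ⟨ha, hb, hc⟩ := ih hzs' hnd' hch'
          set u := UU M (w :: t) with hu
          have hupos : ∀ p, 0 ≤ u p := by
            intro p
            by_cases hp : p ∈ (w :: t)
            · linarith [hb p hp]
            · rw [ha p hp]
          have hbv : bb M (Pi.single z 1) u ≤ -(1/2) := by
            rw [bb_single_left]
            calc ∑ p, kk M z p * u p ≤ ∑ p, (if p = w then -(1/2) else 0 : ℝ) := by
                  apply Finset.sum_le_sum
                  intro p _
                  by_cases hpw : p = w
                  · rw [if_pos hpw, hpw]
                    have h1 := kk_le_neg_half M hadj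
                    have h2 := hb w List.mem_cons_self
                    nlinarith
                  · simp only [if_neg hpw]
                    by_cases hp : p ∈ (w :: t)
                    · have hzp : z ≠ p := fun h => hznotin (h ▸ hp)
                      have := kk_nonpos M hzp
                      have := hupos p
                      nlinarith
                    · rw [ha p hp]; ring_nf; rfl
              _ = -(1/2) := by rw [Finset.sum_ite_eq' Finset.univ w (fun _ => -(1/2))]; simp
          refine ⟨?_, ?_, ?_⟩
          · intro p hp
            have hpz : p ≠ z := by simp at hp; tauto
            have hpmem : p ∉ (w :: t) := by simp at hp; simp; tauto
            rw [UU_cons, ← hu, rf_apply]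
            simp only [Pi.sub_apply, Pi.smul_apply, smul_eq_mul,
              Pi.single_eq_of_ne hpz, ha p hpmem]
            ring
          · intro p hp
            rw [UU_cons, ← hu, rf_apply]
            rcases List.mem_cons.mp hp with hpz | hpmem
            · subst hpz
              simp only [Pi.sub_apply, Pi.smul_apply, smul_eq_mul, Pi.single_eq_same,
                ha p hznotin]
              nlinarith
            · have hpz : p ≠ z := fun h => hznotin (h ▸ hpmem)
              simp only [Pi.sub_apply, Pi.smul_apply, smul_eq_mul, Pi.single_eq_of_ne hpz]
              have := hb p hpmem
              nlinarith
          · rw [UU_cons, ← hu]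
            rw [rf_bb M (by rw [bb_single_single, kk_diag])]
            exact hc

end Rep
section NoCycle

variable {B : Type*} [DecidableEq B] {W : Type*} [Group W] {M : CoxeterMatrix B} [Fintype B]
variable (cs : CoxeterSystem M W)

lemma UU_eq_grep : ∀ (zs : List B) (h : zs ≠ []),
    grep cs (cs.wordProd zs.dropLast) (Pi.single (zs.getLast h) 1) = UU M zs := by
  intro zs
  induction zs with
  | nil => intro h; exact absurd rfl h
  | cons z zs' ih =>
      intro _
      match zs' , ih with
      | [], _ =>
          simp only [List.dropLast_singleton, cs.wordProd_nil, map_one, List.getLast_singleton,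
            UU_singleton]
          rfl
      | w :: t, ih =>
          have h' : (w :: t) ≠ [] := by simp
          have hdl : (z :: w :: t).dropLast = z :: (w :: t).dropLast := by
            rw [List.dropLast_cons₂]
          have hgl : (z :: w :: t).getLast (by simp) = (w :: t).getLast h' := by
            rw [List.getLast_cons h']
          rw [hdl, hgl, cs.wordProd_cons, map_mul, grep_simple, UU_cons]
          show rf M (Pi.single z 1) (grep cs (cs.wordProd (w :: t).dropLast)
            (Pi.single ((w :: t).getLast h') 1)) = _
          rw [ih h']

theorem no_cycle [Finite W] (cs : CoxeterSystem M W) {x : B} {zs : List B}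
    (hnd : (x :: zs).Nodup) (hch : (x :: zs).Chain' (Adj M)) (hlen : 2 ≤ zs.length)
    (hne : zs ≠ [])
    (hcl : Adj M x (zs.getLast hne)) : False := by
  match zs, hnd, hch, hlen, hne, hcl with
  | w :: t, hnd, hch, hlen, hne, hcl =>
    have hxnotin : x ∉ (w :: t) := (List.nodup_cons.mp hnd).1
    have hnd' : (w :: t).Nodup := hnd.of_cons
    have hch' : (w :: t).Chain' (Adj M) := (List.isChain_cons_cons.mp hch).2
    have hadjw : Adj M x w := (List.isChain_cons_cons.mp hch).1
    obtain ⟨ha, hb, hc⟩ := UU_spec (w :: t) hne hnd' hch'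
    set u := UU M (w :: t) with hu
    set lst := (w :: t).getLast hne with hlst
    have hlmem : lst ∈ (w :: t) := List.getLast_mem hne
    have htne : t ≠ [] := by
      intro h; subst h; simp at hlen
    have hwlst : w ≠ lst := by
      have : lst ∈ t := by
        rw [hlst, List.getLast_cons htne]
        exact List.getLast_mem htne
      exact fun h => (List.nodup_cons.mp hnd').1 (h ▸ this)
    have hxlst : x ≠ lst := fun h => hxnotin (h ▸ hlmem)
    have hupos : ∀ p, 0 ≤ u p := by
      intro p
      by_cases hp : p ∈ (w :: t)
      · linarith [hb p hp]
      · rw [ha p hp]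
    -- the key inner product bound
    have hbv : bb M (Pi.single x 1) u ≤ -1 := by
      rw [bb_single_left]
      calc ∑ p, kk M x p * u p
          ≤ ∑ p, ((if p = w then -(1/2) else 0) + (if p = lst then -(1/2) else 0) : ℝ) := by
            apply Finset.sum_le_sum
            intro p _
            by_cases hpw : p = w
            · rw [if_pos hpw, if_neg (by rw [hpw]; exact hwlst), hpw]
              have h1 := kk_le_neg_half M hadjw
              have h2 := hb w List.mem_cons_self
              nlinarith
            · rw [if_neg hpw]
              by_cases hpl : p = lst
              · rw [if_pos hpl, hpl]
                have h1 := kk_le_neg_half M hcl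
                have h2 := hb lst hlmem
                nlinarith
              · rw [if_neg hpl]
                by_cases hp : p ∈ (w :: t)
                · have hxp : x ≠ p := fun h => hxnotin (h ▸ hp)
                  have := kk_nonpos M hxp
                  have := hupos p
                  nlinarith
                · rw [ha p hp]; ring_nf; rfl
        _ = -1 := by
            rw [Finset.sum_add_distrib,
              Finset.sum_ite_eq' Finset.univ w (fun _ => -(1/2)),
              Finset.sum_ite_eq' Finset.univ lst (fun _ => -(1/2))]
            simp; norm_num
    -- the group element of infinite order
    have hrep : grep cs (cs.simple x * (cs.wordProd (w :: t).dropLast * cs.simple lst *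
        (cs.wordProd (w :: t).dropLast)⁻¹)) = rf M (Pi.single x 1) * rf M u := by
      rw [map_mul, grep_simple, grep_conj, UU_eq_grep cs (w :: t) hne]
    have : Fintype W := Fintype.ofFinite W
    have hcard : 1 ≤ Fintype.card W := Fintype.card_pos
    obtain ⟨k, hk⟩ : ∃ k, Fintype.card W = k + 1 := ⟨Fintype.card W - 1, by omega⟩
    have hpow : (cs.simple x * (cs.wordProd (w :: t).dropLast * cs.simple lst *
        (cs.wordProd (w :: t).dropLast)⁻¹)) ^ (Fintype.card W) = 1 := pow_card_eq_one
    have hgrep1 : (rf M (Pi.single x 1) * rf M u)^(k+1) = 1 := by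
      rw [← hrep, ← map_pow, ← hk, hpow, map_one]
    have hcontra := pair_infinite (M := M)
      (by rw [bb_single_single, kk_diag]) hc hbv lst
      (Pi.single_eq_of_ne (Ne.symm hxlst) 1) (hb lst hlmem) k
    apply hcontra
    rw [hgrep1]
    rfl

end NoCycle
section Parity

variable {B : Type*} [DecidableEq B] {W : Type*} [Group W] {M : CoxeterMatrix B}
variable (cs : CoxeterSystem M W)

lemma sandwich_eq_iff {G : Type*} [Group G] (L R w t : G) :
    L * w * R = t ↔ w = L⁻¹ * t * R⁻¹ := by
  constructor <;> intro h
  · rw [← h]; group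
  · rw [h]; group

open Classical in
/-- the sign-tracking endomorphism -/
noncomputable def eta (i : B) : Function.End (W × ZMod 2) :=
  fun p => (cs.simple i * p.1 * cs.simple i, p.2 + (if p.1 = cs.simple i then 1 else 0))

open Classical in
lemma eta_apply (i : B) (w : W) (ε : ZMod 2) :
    eta cs i (w, ε) = (cs.simple i * w * cs.simple i, ε + (if w = cs.simple i then 1 else 0)) :=
  rfl

section EtaLift

variable {i j : B}

open Classical in
private lemma eta_pair_pow (n : ℕ) (w : W) (ε : ZMod 2) :
    ((eta cs i * eta cs j)^n) (w, ε)
      = ((cs.simple i * cs.simple j)^n * w * ((cs.simple i * cs.simple j)^n)⁻¹,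
          ε + ∑ r ∈ Finset.range n,
            ((if w = ((cs.simple i * cs.simple j)^r)⁻¹ * cs.simple j
                * (cs.simple i * cs.simple j)^r then 1 else 0)
            + (if w = ((cs.simple i * cs.simple j)^r)⁻¹
                * (cs.simple j * cs.simple i * cs.simple j)
                * (cs.simple i * cs.simple j)^r then 1 else 0))) := by
  set a := cs.simple i with hadef
  set b := cs.simple j with hbdef
  have haa : a⁻¹ = a := cs.inv_simple i
  have hbb : b⁻¹ = b := cs.inv_simple j
  induction n with
  | zero =>
      show (w, ε) = _
      simp
  | succ n ih =>
      rw [pow_succ']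
      show (eta cs i * eta cs j) (((eta cs i * eta cs j)^n) (w, ε)) = _
      rw [ih]
      show eta cs i (eta cs j _) = _
      rw [eta_apply, eta_apply]
      dsimp only
      simp only [← hadef, ← hbdef]
      have hiff1 : ((a*b)^n * w * ((a*b)^n)⁻¹ = b) ↔ (w = ((a*b)^n)⁻¹ * b * (a*b)^n) := by
        rw [sandwich_eq_iff, inv_inv]
      have hiff2 : (b * ((a*b)^n * w * ((a*b)^n)⁻¹) * b = a)
          ↔ (w = ((a*b)^n)⁻¹ * (b * a * b) * (a*b)^n) := by
        rw [show b * ((a*b)^n * w * ((a*b)^n)⁻¹) * b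
            = (b*(a*b)^n) * w * (((a*b)^n)⁻¹*b) from by group,
          sandwich_eq_iff]
        have : (b*(a*b)^n)⁻¹ * a * ((((a*b)^n)⁻¹*b))⁻¹
            = ((a*b)^n)⁻¹ * (b * a * b) * (a*b)^n := by
          rw [mul_inv_rev, mul_inv_rev, inv_inv, hbb]
          group
        rw [this]
      rw [Prod.mk.injEq]
      refine ⟨?_, ?_⟩
      · rw [show (a*b)^(n+1) = (a*b) * (a*b)^n from pow_succ' (a*b) n,
          mul_inv_rev (a*b) ((a*b)^n), mul_inv_rev a b, haa, hbb]
        group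
      · rw [Finset.sum_range_succ]
        rw [if_congr hiff1 rfl rfl, if_congr hiff2 rfl rfl]
        ring

end EtaLift
end Parity

lemma sum_range_shift_one {A : Type*} [AddCommGroup A] {m : ℕ} (f : ℕ → A)
    (hf : ∀ r, f (r + m) = f r) :
    ∑ r ∈ Finset.range m, f (r + 1) = ∑ r ∈ Finset.range m, f r := by
  have h1 := Finset.sum_range_succ' f m
  have h2 := Finset.sum_range_succ f m
  have h3 : f m = f 0 := by
    have := hf 0
    simpa using this
  rw [h2, h3] at h1
  exact (add_right_cancel h1).symm

lemma sum_range_shift {A : Type*} [AddCommGroup A] {m : ℕ} (f : ℕ → A)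
    (hf : ∀ r, f (r + m) = f r) (μ : ℕ) :
    ∑ r ∈ Finset.range m, f (r + μ) = ∑ r ∈ Finset.range m, f r := by
  induction μ with
  | zero => simp
  | succ μ ih =>
      calc ∑ r ∈ Finset.range m, f (r + (μ + 1))
          = ∑ r ∈ Finset.range m, (fun s => f (s + μ)) (r + 1) := by
            apply Finset.sum_congr rfl; intro r _
            exact congrArg f (by omega)
        _ = ∑ r ∈ Finset.range m, f (r + μ) := by
            apply sum_range_shift_one (fun s => f (s + μ))
            intro r
            show f (r + m + μ) = f (r + μ)
            rw [show r + m + μ = (r + μ) + m from by omega, hf]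
        _ = ∑ r ∈ Finset.range m, f r := ih

open Classical in
lemma dihedral_parity {G : Type*} [Group G] (a b : G) (ha : a*a = 1) (hb : b*b = 1)
    {m : ℕ} (hPm : (a*b)^m = 1) (w : G) :
    (∑ r ∈ Finset.range m,
      ((if w = ((a*b)^r)⁻¹ * b * (a*b)^r then 1 else 0)
      + (if w = ((a*b)^r)⁻¹ * (b*a*b) * (a*b)^r then 1 else 0)) : ZMod 2) = 0 := by
  obtain ⟨P, hPdef⟩ : ∃ P, P = a * b := ⟨_, rfl⟩
  rw [← hPdef] at hPm
  simp only [← hPdef]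
  have haa : a⁻¹ = a := inv_eq_of_mul_eq_one_right ha
  have hbb : b⁻¹ = b := inv_eq_of_mul_eq_one_right hb
  have hPinv : P⁻¹ = b * a := by rw [hPdef, mul_inv_rev, haa, hbb]
  have hbPb : b * P * b = P⁻¹ := by
    rw [show b * P * b = b * a * (b * b) from by rw [hPdef]; group, hb, mul_one, hPinv]
  have haPa : a * P * a = P⁻¹ := by
    rw [show a * P * a = (a * a) * (b * a) from by rw [hPdef]; group, ha, one_mul, hPinv]
  have K1 : ∀ k : ℕ, b * P^k * b = (P^k)⁻¹ := by
    intro k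
    calc b * P^k * b = b * P^k * b⁻¹ := by rw [hbb]
      _ = (b * P * b⁻¹)^k := (conj_pow ..).symm
      _ = (P⁻¹)^k := by rw [hbb, hbPb]
      _ = (P^k)⁻¹ := by rw [inv_pow]
  have K1a : ∀ k : ℕ, a * P^k * a = (P^k)⁻¹ := by
    intro k
    calc a * P^k * a = a * P^k * a⁻¹ := by rw [haa]
      _ = (a * P * a⁻¹)^k := (conj_pow ..).symm
      _ = (P⁻¹)^k := by rw [haa, haPa]
      _ = (P^k)⁻¹ := by rw [inv_pow]
  have K1a' : ∀ k : ℕ, a * (P^k)⁻¹ * a = P^k := by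
    intro k
    rw [← K1a k, show a * (a * P^k * a) * a = (a*a) * P^k * (a*a) from by group, ha,
      one_mul, mul_one]
  have K2 : ∀ k : ℕ, (b*a*b) * P^k * (b*a*b) = (P^k)⁻¹ := by
    intro k
    calc (b*a*b) * P^k * (b*a*b)
        = b * (a * (b * P^k * b) * a) * b := by group
      _ = b * (a * (P^k)⁻¹ * a) * b := by rw [K1 k]
      _ = b * P^k * b := by rw [K1a' k]
      _ = (P^k)⁻¹ := K1 k
  rcases Nat.even_or_odd m with ⟨μ, hμ⟩ | ⟨μ, hμ⟩
  · -- even case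
    have hPμμ : P^μ * P^μ = 1 := by rw [← pow_add, ← hμ, hPm]
    have hPμinv : (P^μ)⁻¹ = P^μ := inv_eq_of_mul_eq_one_right hPμμ
    have hbcomm : b * P^μ = P^μ * b := by
      have h1 := K1 μ
      rw [hPμinv] at h1
      calc b * P^μ = (b * P^μ * b) * b := by
            rw [show (b * P^μ * b) * b = b * P^μ * (b*b) from by group, hb, mul_one]
        _ = P^μ * b := by rw [h1]
    have hDD : (b*a*b) * (b*a*b) = 1 := by
      rw [show (b*a*b) * (b*a*b) = b * (a * (b * b) * a) * b from by group, hb]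
      rw [show b * (a * 1 * a) * b = b * (a * a) * b from by group, ha]
      rw [show b * 1 * b = b * b from by group, hb]
    have hDcomm : (b*a*b) * P^μ = P^μ * (b*a*b) := by
      have h1 := K2 μ
      rw [hPμinv] at h1
      calc (b*a*b) * P^μ = ((b*a*b) * P^μ * (b*a*b)) * (b*a*b) := by
            rw [show ((b*a*b) * P^μ * (b*a*b)) * (b*a*b) = (b*a*b) * P^μ * ((b*a*b)*(b*a*b))
              from by group, hDD, mul_one]
        _ = P^μ * (b*a*b) := by rw [h1]
    have hbfix : (P^μ)⁻¹ * b * P^μ = b := by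
      rw [hPμinv]
      calc P^μ * b * P^μ = b * (P^μ * P^μ) := by rw [← hbcomm]; group
        _ = b := by rw [hPμμ, mul_one]
    have hDfix : (P^μ)⁻¹ * (b*a*b) * P^μ = (b*a*b) := by
      rw [hPμinv]
      calc P^μ * (b*a*b) * P^μ = (b*a*b) * (P^μ * P^μ) := by rw [← hDcomm]; group
        _ = (b*a*b) := by rw [hPμμ, mul_one]
    have hshiftA : ∀ r, ((P^(r+μ))⁻¹ * b * P^(r+μ)) = ((P^r)⁻¹ * b * P^r) := by
      intro r
      rw [pow_add]
      rw [show (P^r * P^μ)⁻¹ * b * (P^r * P^μ) = (P^r)⁻¹ * ((P^μ)⁻¹ * b * P^μ) * P^r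
        from by group, hbfix]
    have hshiftB : ∀ r, ((P^(r+μ))⁻¹ * (b*a*b) * P^(r+μ)) = ((P^r)⁻¹ * (b*a*b) * P^r) := by
      intro r
      rw [pow_add]
      rw [show (P^r * P^μ)⁻¹ * (b*a*b) * (P^r * P^μ) = (P^r)⁻¹ * ((P^μ)⁻¹ * (b*a*b) * P^μ) * P^r
        from by group, hDfix]
    set f : ℕ → ZMod 2 := fun r =>
      ((if w = (P^r)⁻¹ * b * P^r then 1 else 0)
      + (if w = (P^r)⁻¹ * (b*a*b) * P^r then 1 else 0)) with hfdef
    show ∑ r ∈ Finset.range m, f r = 0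
    have hfper : ∀ r, f (r + μ) = f r := by
      intro r
      simp only [hfdef]
      rw [hshiftA r, hshiftB r]
    rw [hμ]
    rw [← Finset.sum_range_add_sum_Ico f (by omega : μ ≤ μ + μ)]
    rw [Finset.sum_Ico_eq_sum_range]
    simp only [show μ + μ - μ = μ from by omega]
    have heq2 : ∑ r ∈ Finset.range μ, f (μ + r) = ∑ r ∈ Finset.range μ, f r := by
      apply Finset.sum_congr rfl
      intro r _
      rw [show μ + r = r + μ from by omega, hfper]
    rw [heq2]
    exact CharTwo.add_self_eq_zero _
  · -- odd case
    have hPμ1 : P^(μ+1) * P^μ = 1 := by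
      rw [← pow_add, show μ + 1 + μ = 2*μ+1 from by omega, ← hμ, hPm]
    have hPμinv : (P^(μ+1))⁻¹ = P^μ := by
      have := inv_eq_of_mul_eq_one_right hPμ1
      rw [← this]
    have hinner : (P^μ)⁻¹ * (b*a*b) * P^μ = b := by
      have hD : b*a*b = P⁻¹ * b := by rw [hPinv]
      have h2 : (P^μ)⁻¹ * P⁻¹ = P^μ := by
        rw [show (P^μ)⁻¹ * P⁻¹ = (P * P^μ)⁻¹ from by rw [mul_inv_rev]]
        rw [show P * P^μ = P^(μ+1) from (pow_succ' P μ).symm]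
        exact hPμinv
      calc (P^μ)⁻¹ * (b*a*b) * P^μ = ((P^μ)⁻¹ * P⁻¹) * b * P^μ := by rw [hD]; group
        _ = P^μ * b * P^μ := by rw [h2]
        _ = P^μ * (b * P^μ * b) * b := by
            rw [show P^μ * (b * P^μ * b) * b = P^μ * b * P^μ * (b*b) from by group, hb,
              mul_one]
        _ = P^μ * (P^μ)⁻¹ * b := by rw [K1 μ]
        _ = b := by group
    have hshift : ∀ r, ((P^(r+μ))⁻¹ * (b*a*b) * P^(r+μ)) = ((P^r)⁻¹ * b * P^r) := by
      intro r
      rw [pow_add]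
      rw [show (P^r * P^μ)⁻¹ * (b*a*b) * (P^r * P^μ) = (P^r)⁻¹ * ((P^μ)⁻¹ * (b*a*b) * P^μ) * P^r
        from by group, hinner]
    set fA : ℕ → ZMod 2 := fun r => (if w = (P^r)⁻¹ * b * P^r then 1 else 0) with hfA
    set fB : ℕ → ZMod 2 := fun r => (if w = (P^r)⁻¹ * (b*a*b) * P^r then 1 else 0) with hfB
    have hper : ∀ r, fB (r + m) = fB r := by
      intro r
      simp only [hfB]
      rw [pow_add, hPm, mul_one]
    show ∑ r ∈ Finset.range m, (fA r + fB r) = 0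
    rw [Finset.sum_add_distrib]
    have hBA : ∑ r ∈ Finset.range m, fB r = ∑ r ∈ Finset.range m, fA r := by
      rw [← sum_range_shift fB hper μ]
      apply Finset.sum_congr rfl
      intro r _
      simp only [hfA, hfB]
      rw [hshift r]
    rw [hBA]
    exact CharTwo.add_self_eq_zero _

section PrepRep

variable {B : Type*} [DecidableEq B] {W : Type*} [Group W] {M : CoxeterMatrix B}
variable (cs : CoxeterSystem M W)

open Classical in
theorem eta_liftable : M.IsLiftable (fun i => eta cs i) := by
  intro i j
  funext p
  obtain ⟨w, ε⟩ := p
  show ((eta cs i * eta cs j)^(M i j)) (w, ε) = (w, ε)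
  rw [eta_pair_pow]
  rw [cs.simple_mul_simple_pow i j]
  rw [dihedral_parity (cs.simple i) (cs.simple j) (cs.simple_mul_simple_self i)
    (cs.simple_mul_simple_self j) (cs.simple_mul_simple_pow i j) w]
  simp

/-- the parity representation -/
noncomputable def prep : W →* Function.End (W × ZMod 2) :=
  cs.lift ⟨fun i => eta cs i, eta_liftable cs⟩

lemma prep_simple (i : B) : prep cs (cs.simple i) = eta cs i :=
  cs.lift_apply_simple (eta_liftable cs) i

open Classical in
lemma prep_wordProd (ω : List B) (w : W) (ε : ZMod 2) :
    prep cs (cs.wordProd ω) (w, ε)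
      = (cs.wordProd ω * w * (cs.wordProd ω)⁻¹,
         ε + (((cs.rightInvSeq ω).count w : ℕ) : ZMod 2)) := by
  induction ω with
  | nil =>
      rw [cs.wordProd_nil, map_one]
      show (w, ε) = _
      simp
  | cons i ω ih =>
      rw [cs.wordProd_cons, map_mul]
      show prep cs (cs.simple i) ((prep cs (cs.wordProd ω)) (w, ε)) = _
      rw [ih, prep_simple, eta_apply]
      have hris : cs.rightInvSeq (i :: ω)
          = ((cs.wordProd ω)⁻¹ * (cs.simple i) * (cs.wordProd ω)) :: cs.rightInvSeq ω := rfl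
      rw [hris]
      rw [Prod.mk.injEq]
      constructor
      · rw [mul_inv_rev, cs.inv_simple]
        group
      · have hcond : (cs.wordProd ω * w * (cs.wordProd ω)⁻¹ = cs.simple i)
            ↔ (((cs.wordProd ω)⁻¹ * cs.simple i * cs.wordProd ω) = w) := by
          rw [sandwich_eq_iff, inv_inv, eq_comm]
        simp only [List.count_cons, beq_iff_eq, Nat.cast_add, Nat.cast_ite, Nat.cast_one,
          Nat.cast_zero, hcond]
        ring

open Classical in
lemma count_ris_parity (ω₁ ω₂ : List B) (h : cs.wordProd ω₁ = cs.wordProd ω₂) (w : W) :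
    (((cs.rightInvSeq ω₁).count w : ℕ) : ZMod 2)
      = (((cs.rightInvSeq ω₂).count w : ℕ) : ZMod 2) := by
  have h1 := prep_wordProd cs ω₁ w 0
  have h2 := prep_wordProd cs ω₂ w 0
  rw [h] at h1
  rw [h1] at h2
  have := (Prod.ext_iff.mp h2).2
  simpa using this

open Classical in
lemma count_lis_parity (ω₁ ω₂ : List B) (h : cs.wordProd ω₁ = cs.wordProd ω₂) (w : W) :
    (((cs.leftInvSeq ω₁).count w : ℕ) : ZMod 2)
      = (((cs.leftInvSeq ω₂).count w : ℕ) : ZMod 2) := by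
  have h' : cs.wordProd ω₁.reverse = cs.wordProd ω₂.reverse := by
    rw [cs.wordProd_reverse, cs.wordProd_reverse, h]
  have hc := count_ris_parity cs ω₁.reverse ω₂.reverse h' w
  rw [cs.rightInvSeq_reverse ω₁, cs.rightInvSeq_reverse ω₂,
    List.count_reverse, List.count_reverse] at hc
  exact hc

open Classical in
theorem not_isLeftDescent_of_not_mem [Fintype B] {m : List B} {j : B} (hj : j ∉ m) :
    ¬ cs.IsLeftDescent (cs.wordProd m) j := by
  intro hdesc
  obtain ⟨ωv, hlen, hveq⟩ := cs.exists_reduced_word (cs.simple j * cs.wordProd m)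
  have hlm : cs.length (cs.simple j * cs.wordProd m) + 1 = cs.length (cs.wordProd m) := by
    rcases cs.length_simple_mul (cs.wordProd m) j with h | h
    · exfalso; have := hdesc; unfold CoxeterSystem.IsLeftDescent at this; omega
    · exact h
  have hπ : cs.wordProd (j :: ωv) = cs.wordProd m := by
    rw [cs.wordProd_cons, ← hveq, ← mul_assoc, cs.simple_mul_simple_self, one_mul]
  have hred : cs.IsReduced (j :: ωv) := by
    show cs.length (cs.wordProd (j :: ωv)) = (j :: ωv).length
    have hl2 : cs.length (cs.wordProd ωv) = ωv.length := hlen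
    rw [hπ, List.length_cons, ← hl2, ← hveq]
    omega
  have hmem : cs.simple j ∈ cs.leftInvSeq (j :: ωv) := by
    have hl : cs.leftInvSeq (j :: ωv)
        = cs.simple j :: List.map (⇑(MulAut.conj (cs.simple j))) (cs.leftInvSeq ωv) := rfl
    rw [hl]
    exact List.mem_cons_self
  have hcount1 : (cs.leftInvSeq (j :: ωv)).count (cs.simple j) = 1 := by
    have hnd := hred.nodup_leftInvSeq
    have hle := List.nodup_iff_count_le_one.mp hnd (cs.simple j)
    have hge := List.count_pos_iff.mpr hmem
    omega
  have hcount0 : (cs.leftInvSeq m).count (cs.simple j) = 0 := by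
    rw [List.count_eq_zero]
    intro hmem'
    obtain ⟨k, hk, hkeq⟩ := List.mem_iff_getElem.mp hmem'
    have hklen : k < m.length := by simpa using hk
    have hgetd := cs.getD_leftInvSeq m k
    rw [List.getD_eq_getElem _ _ hk, hkeq] at hgetd
    have hget : m[k]? = some ((m[k]'hklen)) := by
      rw [List.getElem?_eq_getElem hklen]
    rw [hget] at hgetd
    simp only [Option.map_some, Option.getD_some] at hgetd
    -- hgetd : s j = π (take k m) * s (m[k]) * (π (take k m))⁻¹
    set x := (m[k]'hklen) with hx
    have hxm : x ∈ m := List.getElem_mem hklen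
    have hxj : x ≠ j := fun h => hj (h ▸ hxm)
    have htake : j ∉ m.take k := fun h => hj ((List.take_sublist k m).subset h)
    -- apply the geometric representation
    have hgrep := congrArg (grep cs) hgetd
    rw [grep_simple, grep_conj] at hgrep
    have happ := congrFun (congrArg (fun (f : Function.End (B → ℝ)) => f (Pi.single j 1)) hgrep) j
    -- LHS : rf M (single j 1) (single j 1) j = -1
    have hLHS : rf M (Pi.single j 1) (Pi.single j 1) j = -1 := by
      rw [rf_apply]
      simp only [Pi.sub_apply, Pi.smul_apply, smul_eq_mul, Pi.single_eq_same,
        bb_single_single, kk_diag]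
      norm_num
    -- RHS : = 1
    have hvj : grep cs (cs.wordProd (m.take k)) (Pi.single x 1) j = 0 := by
      rw [grep_coord cs j (m.take k) htake]
      exact Pi.single_eq_of_ne (Ne.symm hxj) 1
    have hRHS : rf M (grep cs (cs.wordProd (m.take k)) (Pi.single x 1)) (Pi.single j 1) j
        = 1 := by
      rw [rf_apply]
      simp only [Pi.sub_apply, Pi.smul_apply, smul_eq_mul, hvj, Pi.single_eq_same]
      ring
    rw [hLHS, hRHS] at happ
    norm_num at happ
  have hpar := count_lis_parity cs (j :: ωv) m hπ (cs.simple j)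
  rw [hcount1, hcount0] at hpar
  simp at hpar

end PrepRep
section Steps

variable {B : Type*} [DecidableEq B] {W : Type*} [Group W] {M : CoxeterMatrix B}

/-- a single conjugation-by-initial-letter step between Coxeter elements -/
def CStep (cs : CoxeterSystem M W) (c c' : W) : Prop :=
  cs.IsCoxeterElement c ∧ ∃ j : B, cs.IsInitial j c ∧ c' = cs.simple j * c * cs.simple j

def Reach (cs : CoxeterSystem M W) : W → W → Prop := Relation.ReflTransGen (CStep cs)

variable (cs : CoxeterSystem M W) [Fintype B]

lemma rotate_step {l : List B} (hnd : l.Nodup) (hall : ∀ i : B, i ∈ l) (hne : l ≠ []) :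
    CStep cs (cs.wordProd l) (cs.wordProd (l.rotate 1)) := by
  match l, hnd, hall, hne with
  | a :: t, hnd, hall, _ =>
    have hat : a ∉ t := (List.nodup_cons.mp hnd).1
    have hndt : t.Nodup := (List.nodup_cons.mp hnd).2
    refine ⟨⟨a :: t, hnd, hall, rfl⟩, a, ?_, ?_⟩
    · show cs.length (cs.simple a * cs.wordProd (a :: t)) < cs.length (cs.wordProd (a :: t))
      have h1 : cs.simple a * cs.wordProd (a :: t) = cs.wordProd t := by
        rw [cs.wordProd_cons, ← mul_assoc, cs.simple_mul_simple_self, one_mul]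
      have h2 : cs.length (cs.simple a * cs.wordProd t) = cs.length (cs.wordProd t) + 1 := by
        rcases cs.length_simple_mul (cs.wordProd t) a with h | h
        · exact h
        · exfalso
          have := not_isLeftDescent_of_not_mem cs hat
          unfold CoxeterSystem.IsLeftDescent at this
          omega
      rw [h1, cs.wordProd_cons, h2]
      omega
    · rw [List.rotate_cons_succ, List.rotate_zero]
      rw [cs.wordProd_append, cs.wordProd_cons, cs.wordProd_cons, cs.wordProd_nil, mul_one]
      rw [← mul_assoc (cs.simple a) (cs.simple a) (cs.wordProd t), cs.simple_mul_simple_self,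
        one_mul]

lemma reach_rotate {l : List B} (hnd : l.Nodup) (hall : ∀ i : B, i ∈ l) (k : ℕ) :
    Reach cs (cs.wordProd l) (cs.wordProd (l.rotate k)) := by
  induction k with
  | zero =>
      rw [List.rotate_zero]
      exact Relation.ReflTransGen.refl
  | succ k ih =>
      by_cases hne : l = []
      · subst hne; simp only [List.rotate_nil]; exact Relation.ReflTransGen.refl
      · have hstep := rotate_step cs (l := l.rotate k) (List.nodup_rotate.mpr hnd)
          (fun i => List.mem_rotate.mpr (hall i)) (by simp [hne, List.rotate_eq_nil_iff])
        rw [List.rotate_rotate] at hstep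
        exact Relation.ReflTransGen.tail ih hstep

lemma reach_rotate_back {l : List B} (hnd : l.Nodup) (hall : ∀ i : B, i ∈ l) (k : ℕ) :
    Reach cs (cs.wordProd (l.rotate k)) (cs.wordProd l) := by
  by_cases hne : l = []
  · subst hne; simp only [List.rotate_nil]; exact Relation.ReflTransGen.refl
  · have hlen : 0 < l.length := List.length_pos_iff.mpr hne
    have h1 := reach_rotate cs (l := l.rotate k) (List.nodup_rotate.mpr hnd)
      (fun i => List.mem_rotate.mpr (hall i)) (l.length - k % l.length)
    rw [List.rotate_rotate] at h1
    have hq := Nat.div_add_mod k l.length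
    have hr : k % l.length < l.length := Nat.mod_lt _ hlen
    have harith : k + (l.length - k % l.length) = l.length * (k / l.length + 1) := by
      obtain ⟨Q, hQ⟩ : ∃ Q, Q = l.length * (k / l.length) := ⟨_, rfl⟩
      rw [Nat.mul_succ, ← hQ]
      rw [← hQ] at hq
      omega
    rw [harith, List.rotate_length_mul] at h1
    exact h1

lemma wordProd_swap (a b : List B) (x y : B) (hxy : M x y = 2) :
    cs.wordProd (a ++ x :: y :: b) = cs.wordProd (a ++ y :: x :: b) := by
  have h2 : (cs.simple x * cs.simple y) * (cs.simple x * cs.simple y) = 1 := by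
    have := cs.simple_mul_simple_pow x y
    rw [hxy, pow_two] at this
    exact this
  have hcomm : cs.simple x * cs.simple y = cs.simple y * cs.simple x := by
    have hinv : (cs.simple x * cs.simple y)⁻¹ = cs.simple x * cs.simple y :=
      inv_eq_of_mul_eq_one_right h2
    rw [← hinv, mul_inv_rev, cs.inv_simple, cs.inv_simple]
  rw [cs.wordProd_append, cs.wordProd_append, cs.wordProd_cons, cs.wordProd_cons,
    cs.wordProd_cons, cs.wordProd_cons]
  rw [← mul_assoc (cs.simple x) (cs.simple y), ← mul_assoc (cs.simple y) (cs.simple x), hcomm]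

end Steps

section LRelDef

variable {B : Type*} [DecidableEq B] {M : CoxeterMatrix B}

/-- elementary syntactic moves on lists -/
inductive LMove (M : CoxeterMatrix B) : List B → List B → Prop
  | rot (l : List B) : LMove M l (l.rotate 1)
  | swap (a b : List B) (x y : B) (h : M x y = 2) : LMove M (a ++ x :: y :: b) (a ++ y :: x :: b)

/-- the equivalence generated by the moves -/
def LRel (M : CoxeterMatrix B) : List B → List B → Prop := Relation.EqvGen (LMove M)

lemma lmove_perm {l l' : List B} (h : LMove M l l') : l.Perm l' := by
  cases h with
  | rot l => exact (l.rotate_perm 1).symm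
  | swap a b x y h =>
      exact List.Perm.append_left a (List.Perm.swap y x b)

lemma lrel_perm {l l' : List B} (h : LRel M l l') : l.Perm l' := by
  induction h with
  | rel _ _ hm => exact lmove_perm hm
  | refl => exact List.Perm.refl _
  | symm _ _ _ ih => exact ih.symm
  | trans _ _ _ _ _ ih1 ih2 => exact ih1.trans ih2

lemma lrel_refl (l : List B) : LRel M l l := Relation.EqvGen.refl l
lemma lrel_symm {l l' : List B} (h : LRel M l l') : LRel M l' l := Relation.EqvGen.symm _ _ h
lemma lrel_trans {l₁ l₂ l₃ : List B} (h1 : LRel M l₁ l₂) (h2 : LRel M l₂ l₃) : LRel M l₁ l₃ :=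
  Relation.EqvGen.trans _ _ _ h1 h2

lemma lrel_rotate (l : List B) (k : ℕ) : LRel M l (l.rotate k) := by
  induction k with
  | zero => rw [List.rotate_zero]; exact lrel_refl l
  | succ k ih =>
      refine lrel_trans ih ?_
      rw [← List.rotate_rotate]
      exact Relation.EqvGen.rel _ _ (LMove.rot _)

lemma lrel_of_eq {l l' : List B} (h : l = l') : LRel M l l' := h ▸ lrel_refl l

end LRelDef

section Transfer

variable {B : Type*} [DecidableEq B] {W : Type*} [Group W] {M : CoxeterMatrix B}
variable (cs : CoxeterSystem M W) [Fintype B]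

lemma lrel_reach_aux {l l' : List B} (h : LRel M l l') :
    ((l.Nodup ∧ ∀ i : B, i ∈ l) ↔ (l'.Nodup ∧ ∀ i : B, i ∈ l')) ∧
    ((l.Nodup ∧ ∀ i : B, i ∈ l) →
      Reach cs (cs.wordProd l) (cs.wordProd l') ∧
      Reach cs (cs.wordProd l') (cs.wordProd l)) := by
  induction h with
  | rel l l' hm =>
      have hp := lmove_perm hm
      constructor
      · constructor
        · rintro ⟨h1, h2⟩
          exact ⟨hp.nodup_iff.mp h1, fun i => hp.mem_iff.mp (h2 i)⟩
        · rintro ⟨h1, h2⟩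
          exact ⟨hp.nodup_iff.mpr h1, fun i => hp.mem_iff.mpr (h2 i)⟩
      · rintro ⟨hnd, hall⟩
        cases hm with
        | rot l =>
            by_cases hne : l = []
            · subst hne
              simp only [List.rotate_nil]
              exact ⟨Relation.ReflTransGen.refl, Relation.ReflTransGen.refl⟩
            · exact ⟨reach_rotate cs hnd hall 1, reach_rotate_back cs hnd hall 1⟩
        | swap a b x y hxy =>
            rw [wordProd_swap cs a b x y hxy]
            exact ⟨Relation.ReflTransGen.refl, Relation.ReflTransGen.refl⟩
  | refl l =>
      exact ⟨Iff.rfl, fun _ => ⟨Relation.ReflTransGen.refl, Relation.ReflTransGen.refl⟩⟩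
  | symm l l' _ ih =>
      refine ⟨ih.1.symm, fun hinv' => ?_⟩
      have := ih.2 (ih.1.mpr hinv')
      exact ⟨this.2, this.1⟩
  | trans l₁ l₂ l₃ _ _ ih1 ih2 =>
      refine ⟨ih1.1.trans ih2.1, fun hinv => ?_⟩
      have h1 := ih1.2 hinv
      have h2 := ih2.2 (ih1.1.mp hinv)
      exact ⟨h1.1.trans h2.1, h2.2.trans h1.2⟩

lemma lrel_reach {l l' : List B} (h : LRel M l l') (hnd : l.Nodup) (hall : ∀ i : B, i ∈ l) :
    Reach cs (cs.wordProd l) (cs.wordProd l') :=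
  ((lrel_reach_aux cs h).2 ⟨hnd, hall⟩).1

end Transfer
section Slides

variable {B : Type*} [DecidableEq B] {M : CoxeterMatrix B}

lemma slide_right {x : B} : ∀ (v u : List B), (∀ z ∈ v, M x z = 2) →
    LRel M (u ++ x :: v) ((u ++ v) ++ [x]) := by
  intro v
  induction v with
  | nil =>
      intro u _
      apply lrel_of_eq
      simp
  | cons z v ih =>
      intro u hz
      have h1 : LRel M (u ++ x :: z :: v) (u ++ z :: x :: v) :=
        Relation.EqvGen.rel _ _ (LMove.swap u v x z (hz z List.mem_cons_self))
      refine lrel_trans h1 ?_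
      refine lrel_trans (lrel_of_eq (show u ++ z :: x :: v = (u ++ [z]) ++ x :: v by simp)) ?_
      refine lrel_trans (ih (u ++ [z]) (fun w hw => hz w (List.mem_cons_of_mem _ hw)))
        (lrel_of_eq ?_)
      simp

lemma slide_left {x : B} : ∀ (u v : List B), (∀ z ∈ u, M x z = 2) →
    LRel M (u ++ x :: v) (x :: (u ++ v)) := by
  intro u
  induction u using List.reverseRecOn with
  | nil =>
      intro v _
      exact lrel_refl _
  | append_singleton u z ih =>
      intro v hz
      have hMzx : M z x = 2 := by
        rw [M.symmetric z x]
        exact hz z (by simp)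
      refine lrel_trans (lrel_of_eq
        (show (u ++ [z]) ++ x :: v = u ++ z :: x :: v by simp)) ?_
      refine lrel_trans (Relation.EqvGen.rel _ _ (LMove.swap u v z x hMzx)) ?_
      refine lrel_trans (ih (z :: v) (fun w hw => hz w (by simp at hw ⊢; tauto))) ?_
      apply lrel_of_eq
      simp

/-- moving a "leaf" letter `x` to the end of the list -/
lemma insert_move {x : B} {T0 : Finset B}
    (hsmall : ∀ z₁ ∈ T0, ∀ z₂ ∈ T0, Adj M x z₁ → Adj M x z₂ → z₁ = z₂)
    {u v : List B} (hnd : (u ++ x :: v).Nodup) (hset : (u ++ v).toFinset = T0) :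
    LRel M (u ++ x :: v) ((u ++ v) ++ [x]) := by
  obtain ⟨hu, hxv', hdisj⟩ := List.nodup_append'.mp hnd
  have hxu : x ∉ u := fun h => hdisj h List.mem_cons_self
  have hxv : x ∉ v := (List.nodup_cons.mp hxv').1
  have hdisj' : ∀ a ∈ u, a ∉ v := fun a ha hav => hdisj ha (List.mem_cons_of_mem _ hav)
  by_cases hcase : ∀ z ∈ u, M x z = 2
  · refine lrel_trans (slide_left u v hcase) ?_
    refine lrel_trans (Relation.EqvGen.rel _ _ (LMove.rot (x :: (u ++ v)))) (lrel_of_eq ?_)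
    rw [List.rotate_cons_succ, List.rotate_zero]
  · push_neg at hcase
    obtain ⟨z₀, hz₀u, hz₀M⟩ := hcase
    have hxz₀ : x ≠ z₀ := fun h => hxu (h ▸ hz₀u)
    have hadj₀ : Adj M x z₀ := ⟨hxz₀, hz₀M⟩
    have hz₀T : z₀ ∈ T0 := by rw [← hset]; simp [hz₀u]
    have hv : ∀ z ∈ v, M x z = 2 := by
      intro z hzv
      by_contra hM
      have hxz : x ≠ z := fun h => hxv (h ▸ hzv)
      have hzT : z ∈ T0 := by rw [← hset]; simp [hzv]
      have heq := hsmall z₀ hz₀T z hzT hadj₀ ⟨hxz, hM⟩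
      exact hdisj' z₀ hz₀u (heq ▸ hzv)
    exact slide_right v u hv

end Slides
section MainComb

variable {B : Type*} [DecidableEq B] {M : CoxeterMatrix B}

instance adjDecidable (M : CoxeterMatrix B) (x : B) : DecidablePred (Adj M x) :=
  fun y => decidable_of_iff (x ≠ y ∧ M x y ≠ 2) Iff.rfl

lemma lrel_lift {x : B} {T0 : Finset B}
    (hsmall : ∀ z₁ ∈ T0, ∀ z₂ ∈ T0, Adj M x z₁ → Adj M x z₂ → z₁ = z₂)
    (hxT0 : x ∉ T0)
    {m m' : List B} (h : LRel M m m') :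
    ((m.Nodup ∧ m.toFinset = T0) ↔ (m'.Nodup ∧ m'.toFinset = T0)) ∧
    ((m.Nodup ∧ m.toFinset = T0) → LRel M (m ++ [x]) (m' ++ [x])) := by
  induction h with
  | rel m m' hm =>
      have hp := lmove_perm hm
      have hpf : m.toFinset = m'.toFinset := by
        ext y
        simp only [List.mem_toFinset]
        exact hp.mem_iff
      constructor
      · constructor
        · rintro ⟨h1, h2⟩
          exact ⟨hp.nodup_iff.mp h1, by rw [← hpf]; exact h2⟩
        · rintro ⟨h1, h2⟩
          exact ⟨hp.nodup_iff.mpr h1, by rw [hpf]; exact h2⟩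
      rintro ⟨hnd, hset⟩
      have hxm : x ∉ m := fun hx => hxT0 (hset ▸ List.mem_toFinset.mpr hx)
      cases hm with
      | rot m =>
          match m, hnd, hset, hxm with
          | [], _, _, _ =>
              exact lrel_refl _
          | c :: d, hnd, hset, hxm =>
              have hcd := List.nodup_cons.mp hnd
              have hxc : x ≠ c := fun h => hxm (h ▸ List.mem_cons_self)
              have hxd : x ∉ d := fun h => hxm (List.mem_cons_of_mem c h)
              have h1 : LRel M ((c :: d) ++ [x]) (d ++ x :: [c]) := by
                refine lrel_trans (Relation.EqvGen.rel _ _ (LMove.rot ((c :: d) ++ [x])))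
                  (lrel_of_eq ?_)
                show ((c :: (d ++ [x])).rotate 1) = _
                rw [List.rotate_cons_succ, List.rotate_zero]
                simp
              refine lrel_trans h1 ?_
              have hnd2 : (d ++ x :: [c]).Nodup := by
                rw [List.nodup_append']
                refine ⟨hcd.2, ?_, ?_⟩
                · exact List.nodup_cons.mpr ⟨by simp [hxc], List.nodup_singleton c⟩
                · intro a ha
                  simp only [List.mem_cons, List.mem_singleton, List.not_mem_nil]
                  rintro (rfl | rfl | h)
                  · exact hxd ha
                  · exact hcd.1 ha
                  · exact h.elim
              have hset2 : (d ++ [c]).toFinset = T0 := by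
                rw [← hset]
                ext y
                simp
              refine lrel_trans (insert_move hsmall hnd2 hset2) (lrel_of_eq ?_)
              rw [List.rotate_cons_succ, List.rotate_zero]
      | swap a b y z hyz =>
          refine lrel_trans (lrel_of_eq (show (a ++ y :: z :: b) ++ [x]
            = a ++ y :: z :: (b ++ [x]) by simp)) ?_
          refine lrel_trans (Relation.EqvGen.rel _ _ (LMove.swap a (b ++ [x]) y z hyz))
            (lrel_of_eq ?_)
          simp
  | refl m => exact ⟨Iff.rfl, fun _ => lrel_refl _⟩
  | symm m m' _ ih =>
      exact ⟨ih.1.symm, fun h' => lrel_symm (ih.2 (ih.1.mpr h'))⟩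
  | trans m₁ m₂ m₃ _ _ ih1 ih2 =>
      exact ⟨ih1.1.trans ih2.1, fun h =>
        lrel_trans (ih1.2 h) (ih2.2 (ih1.1.mp h))⟩

lemma rotate_to_last {l : List B} {x : B} (hx : x ∈ l) (hnd : l.Nodup) :
    ∃ m : List B, LRel M l (m ++ [x]) ∧ m.Nodup ∧ x ∉ m ∧
      m.toFinset = l.toFinset.erase x := by
  obtain ⟨u, v, rfl⟩ := List.append_of_mem hx
  obtain ⟨hu, hxv', hdisj⟩ := List.nodup_append'.mp hnd
  have hxu : x ∉ u := fun h => hdisj h List.mem_cons_self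
  have hxv : x ∉ v := (List.nodup_cons.mp hxv').1
  have hvnd : v.Nodup := (List.nodup_cons.mp hxv').2
  have hdisj' : ∀ a ∈ u, a ∉ v := fun a ha hav => hdisj ha (List.mem_cons_of_mem _ hav)
  refine ⟨v ++ u, ?_, ?_, ?_, ?_⟩
  · have hlen : u.length + 1 ≤ (u ++ x :: v).length := by simp
    have hrot : (u ++ x :: v).rotate (u.length + 1) = (v ++ u) ++ [x] := by
      have heq : u ++ x :: v = (u ++ [x]) ++ v := by simp
      rw [heq, List.rotate_eq_drop_append_take (by simp)]
      rw [show u.length + 1 = (u ++ [x]).length by simp]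
      rw [List.drop_left, List.take_left]
      simp
    exact lrel_trans (lrel_rotate _ (u.length + 1)) (lrel_of_eq hrot)
  · rw [List.nodup_append']
    exact ⟨hvnd, hu, fun a hav hau => hdisj' a hau hav⟩
  · intro h
    rcases List.mem_append.mp h with h | h
    · exact hxv h
    · exact hxu h
  · ext y
    simp only [List.toFinset_append, Finset.mem_union, List.mem_toFinset, Finset.mem_erase,
      List.mem_append, List.mem_cons]
    constructor
    · rintro (hy | hy)
      · exact ⟨fun h => hxv (h ▸ hy), Or.inr (Or.inr hy)⟩
      · exact ⟨fun h => hxu (h ▸ hy), Or.inl hy⟩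
    · rintro ⟨hne, (hy | hy | hy)⟩
      · exact Or.inr hy
      · exact absurd hy hne
      · exact Or.inl hy

lemma lists_lrel [Fintype B]
    (hleaf : ∀ T : Finset B, T.Nonempty → ∃ x ∈ T, (T.filter (Adj M x)).card ≤ 1) :
    ∀ (n : ℕ) (l l' : List B), l.toFinset.card ≤ n → l.Nodup → l'.Nodup →
      l.toFinset = l'.toFinset → LRel M l l' := by
  intro n
  induction n with
  | zero =>
      intro l l' hcard hnd hnd' hset
      have hl : l = [] := by
        rw [← List.toFinset_eq_empty_iff]
        exact Finset.card_eq_zero.mp (by omega)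
      have hl' : l' = [] := by
        rw [← List.toFinset_eq_empty_iff, ← hset, hl]
        simp
      rw [hl, hl']
      exact lrel_refl _
  | succ n ih =>
      intro l l' hcard hnd hnd' hset
      by_cases hle : l = []
      · have hl' : l' = [] := by
          rw [← List.toFinset_eq_empty_iff, ← hset, hle]
          simp
        rw [hle, hl']
        exact lrel_refl _
      · obtain ⟨a, ha⟩ := List.exists_mem_of_ne_nil l hle
        have hTne : l.toFinset.Nonempty := ⟨a, List.mem_toFinset.mpr ha⟩
        obtain ⟨x, hxT, hxleaf⟩ := hleaf l.toFinset hTne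
        have hsmall : ∀ z₁ ∈ l.toFinset.erase x, ∀ z₂ ∈ l.toFinset.erase x,
            Adj M x z₁ → Adj M x z₂ → z₁ = z₂ := by
          intro z₁ h₁ z₂ h₂ ha₁ ha₂
          have hm₁ : z₁ ∈ l.toFinset.filter (Adj M x) :=
            Finset.mem_filter.mpr ⟨Finset.mem_of_mem_erase h₁, ha₁⟩
          have hm₂ : z₂ ∈ l.toFinset.filter (Adj M x) :=
            Finset.mem_filter.mpr ⟨Finset.mem_of_mem_erase h₂, ha₂⟩
          exact Finset.card_le_one.mp hxleaf _ hm₁ _ hm₂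
        have hxl : x ∈ l := List.mem_toFinset.mp hxT
        have hxl' : x ∈ l' := List.mem_toFinset.mp (by rw [← hset]; exact hxT)
        obtain ⟨m, hml, hmnd, hxm, hmset⟩ := rotate_to_last (M := M) hxl hnd
        obtain ⟨m', hml', hmnd', hxm', hmset'⟩ := rotate_to_last (M := M) hxl' hnd'
        rw [← hset] at hmset'
        have hcard' : m.toFinset.card ≤ n := by
          rw [hmset, Finset.card_erase_of_mem hxT]
          have : 1 ≤ l.toFinset.card := Finset.card_pos.mpr hTne
          omega
        have hrel : LRel M m m' :=
          ih m m' hcard' hmnd hmnd' (by rw [hmset, hmset'])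
        have hlift := (lrel_lift hsmall (Finset.notMem_erase x l.toFinset) hrel).2
          ⟨hmnd, hmset⟩
        exact lrel_trans hml (lrel_trans hlift (lrel_symm hml'))

end MainComb
section Leaf

variable {B : Type*} [DecidableEq B] {W : Type*} [Group W] {M : CoxeterMatrix B}

open Classical in
lemma hasLeaf_of_finite [Fintype B] [Finite W] (cs : CoxeterSystem M W) :
    ∀ T : Finset B, T.Nonempty → ∃ x ∈ T, (T.filter (Adj M x)).card ≤ 1 := by
  intro T hTne
  by_contra hcon
  push_neg at hcon
  have hdeg : ∀ x ∈ T, 2 ≤ (T.filter (Adj M x)).card := by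
    intro x hx; have := hcon x hx; omega
  set P : ℕ → Prop := fun n => ∃ p : List B,
    p.Nodup ∧ p.Chain' (Adj M) ∧ (∀ z ∈ p, z ∈ T) ∧ p.length = n with hP
  obtain ⟨a, ha⟩ := hTne
  have hP1 : P 1 := ⟨[a], by simp, List.isChain_singleton a, by simp [ha], rfl⟩
  have hbound : ∀ n, P n → n ≤ T.card := by
    rintro n ⟨p, hnd, _, hsub, hlen⟩
    calc n = p.length := hlen.symm
      _ = p.toFinset.card := (List.toFinset_card_of_nodup hnd).symm
      _ ≤ T.card := Finset.card_le_card (fun y hy => hsub y (List.mem_toFinset.mp hy))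
  have hTcard : 1 ≤ T.card := Finset.card_pos.mpr ⟨a, ha⟩
  have hPN : P (Nat.findGreatest P T.card) := Nat.findGreatest_spec (hbound 1 hP1) hP1
  set N := Nat.findGreatest P T.card with hN
  have hmax : ∀ k, N < k → ¬ P k := by
    intro k hk hPk
    exact Nat.findGreatest_is_greatest hk (hbound k hPk) hPk
  have hN1 : 1 ≤ N := Nat.le_findGreatest hTcard hP1
  obtain ⟨p, hnd, hch, hsub, hlen⟩ := hPN
  match p, hnd, hch, hsub, hlen with
  | [], _, _, _, hlen => simp at hlen; omega
  | h₀ :: rest, hnd, hch, hsub, hlen =>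
  have hh₀T : h₀ ∈ T := hsub h₀ List.mem_cons_self
  have hnbp : ∀ z ∈ T.filter (Adj M h₀), z ∈ h₀ :: rest := by
    intro z hz
    by_contra hzp
    obtain ⟨hzT, hzadj⟩ := Finset.mem_filter.mp hz
    have hP' : P (N + 1) := by
      refine ⟨z :: h₀ :: rest, List.nodup_cons.mpr ⟨hzp, hnd⟩,
        List.isChain_cons_cons.mpr ⟨adj_symm hzadj, hch⟩, ?_, by simp [hlen]⟩
      intro y hy
      rcases List.mem_cons.mp hy with rfl | hy
      · exact hzT
      · exact hsub y hy
    exact hmax (N + 1) (by omega) hP'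
  obtain ⟨z₁, hz₁, z₂, hz₂, hz12⟩ := Finset.one_lt_card.mp (hdeg h₀ hh₀T)
  have hzh : ∀ z ∈ T.filter (Adj M h₀), z ≠ h₀ := by
    intro z hz h
    exact (Finset.mem_filter.mp hz).2.1 h.symm
  have hz₁rest : z₁ ∈ rest := by
    rcases List.mem_cons.mp (hnbp z₁ hz₁) with h | h
    · exact absurd h (hzh z₁ hz₁)
    · exact h
  have hz₂rest : z₂ ∈ rest := by
    rcases List.mem_cons.mp (hnbp z₂ hz₂) with h | h
    · exact absurd h (hzh z₂ hz₂)
    · exact h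
  match rest, hnd, hch, hsub, hlen, hz₁rest, hz₂rest with
  | [], _, _, _, _, hz₁rest, _ => exact absurd hz₁rest (List.not_mem_nil)
  | w :: rest', hnd, hch, hsub, hlen, hz₁rest, hz₂rest =>
  have hex : ∃ z, z ∈ T.filter (Adj M h₀) ∧ z ∈ rest' := by
    by_cases h1 : z₁ = w
    · refine ⟨z₂, hz₂, ?_⟩
      rcases List.mem_cons.mp hz₂rest with h | h
      · exact absurd (h.trans h1.symm) hz12.symm
      · exact h
    · refine ⟨z₁, hz₁, ?_⟩
      rcases List.mem_cons.mp hz₁rest with h | h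
      · exact absurd h h1
      · exact h
  obtain ⟨z, hzfil, hzrest'⟩ := hex
  obtain ⟨d, e, hde⟩ := List.append_of_mem hzrest'
  subst hde
  have hpeq : (h₀ :: (w :: (d ++ [z]))) ++ e = h₀ :: w :: (d ++ z :: e) := by simp
  have hndq : ((h₀ :: (w :: (d ++ [z]))) ++ e).Nodup := by rw [hpeq]; exact hnd
  have hchq : ((h₀ :: (w :: (d ++ [z]))) ++ e).Chain' (Adj M) := by rw [hpeq]; exact hch
  have hnd2 : (h₀ :: (w :: (d ++ [z]))).Nodup := (List.nodup_append.mp hndq).1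
  have hch2 : (h₀ :: (w :: (d ++ [z]))).Chain' (Adj M) := hchq.left_of_append
  have hne2 : (w :: (d ++ [z])) ≠ [] := by simp
  have hlast : (w :: (d ++ [z])).getLast hne2 = z := by
    have h1 : (w :: (d ++ [z])).getLast? = some z := by
      rw [show w :: (d ++ [z]) = (w :: d) ++ [z] by simp]
      exact List.getLast?_concat
    rw [List.getLast?_eq_getLast hne2] at h1
    exact Option.some_injective _ h1
  exact no_cycle cs hnd2 hch2 (by simp) hne2
    (by rw [hlast]; exact (Finset.mem_filter.mp hzfil).2)

end Leaf
section Final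

variable {B : Type*} [DecidableEq B] {W : Type*} [Group W] {M : CoxeterMatrix B}

lemma reach_exists (cs : CoxeterSystem M W) (c c' : W) (h : Reach cs c c') :
    ∃ (k : ℕ) (f : ℕ → W), f 0 = c ∧ f k = c' ∧ ∀ i < k, cs.IsCoxeterElement (f i) ∧
      ∃ j : B, cs.IsInitial j (f i) ∧ f (i + 1) = cs.simple j * f i * cs.simple j := by
  induction h using Relation.ReflTransGen.head_induction_on with
  | refl => exact ⟨0, fun _ => c', rfl, rfl, by omega⟩
  | head hstep _ ih =>
      rename_i a b _
      obtain ⟨k, f, hf0, hfk, hfm⟩ := ih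
      obtain ⟨hcox, j, hinit, heq⟩ := hstep
      refine ⟨k + 1, fun n => if n = 0 then a else f (n - 1), by simp, by simp [hfk], ?_⟩
      intro i hi
      rcases Nat.eq_zero_or_pos i with rfl | hipos
      · simp only [if_pos rfl, if_neg (Nat.succ_ne_zero 0)]
        exact ⟨hcox, j, hinit, by rw [hf0]; exact heq⟩
      · have h1 : i ≠ 0 := by omega
        have h2 : i + 1 ≠ 0 := by omega
        simp only [if_neg h1, if_neg h2]
        have h3 : i - 1 < k := by omega
        have := hfm (i - 1) h3
        rw [show i - 1 + 1 = i from by omega] at this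
        rw [show i + 1 - 1 = i from by omega]
        exact this

theorem main_connect (cs : CoxeterSystem M W) [Finite W] (c c' : W)
    (hc : cs.IsCoxeterElement c) (hc' : cs.IsCoxeterElement c') :
    ∃ (k : ℕ) (f : ℕ → W), f 0 = c ∧ f k = c' ∧
      ∀ i < k, cs.IsCoxeterElement (f i) ∧
        ∃ j : B, cs.IsInitial j (f i) ∧ f (i + 1) = cs.simple j * f i * cs.simple j := by
  obtain ⟨l, hnd, hall, rfl⟩ := hc
  obtain ⟨l', hnd', hall', rfl⟩ := hc'
  haveI : Fintype B := Fintype.ofList l hall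
  have hset : l.toFinset = l'.toFinset := by
    ext y
    simp [hall y, hall' y]
  have hlrel : LRel M l l' :=
    lists_lrel (hasLeaf_of_finite cs) l.toFinset.card l l' (le_refl _) hnd hnd' hset
  have hreach : Reach cs (cs.wordProd l) (cs.wordProd l') := lrel_reach cs hlrel hnd hall
  exact reach_exists cs _ _ hreach

end Final

end CoxAux

/-- any two Coxeter elements are connected by a sequence of conjugations by
initial letters. -/
theorem coxeterElements_connected_by_initial_conjugation
    (cs : CoxeterSystem M W) [Finite W] (c c' : W)
    (hc : cs.IsCoxeterElement c) (hc' : cs.IsCoxeterElement c') :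
    ∃ (k : ℕ) (f : ℕ → W), f 0 = c ∧ f k = c' ∧
      ∀ i < k, cs.IsCoxeterElement (f i) ∧
        ∃ j : B, cs.IsInitial j (f i) ∧ f (i + 1) = cs.simple j * f i * cs.simple j :=
  CoxAux.main_connect cs c c' hc hc'
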